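/- arXiv:2303.08949 — 6 statements merged into one kernel-verified Lean document; each statement's English description precedes it below -/
import Mathlib

section
/- Let p be a prime, and write a positive integer d as d = α·p + β with 0 ≤ β ≤ p−1 and β ≥ 1. Then for any ℓ ∈ ℤ, in 𝔽_p[x,t]: ∏_{k=1}^{d−1} (x + (ℓ−k)·t) = (x^p − t^{p−1}·x)^α · ∏_{j=1}^{β−1} (x + (ℓ−j)·t). -/
/-!
Over `𝔽_p` one has `X^p - X = ∏_{c ∈ 𝔽_p} (X - c)`; homogenizing gives
`x^p - t^{p-1} x = ∏_c (x - c t)`. For any `p` consecutive integers `k`, the residues of `ℓ - k`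
run through `𝔽_p` exactly once, so the last `α p` of the `d - 1` factors form `α` copies of
this product, and the first `β - 1` factors remain.
-/

open MvPolynomial Finset

namespace FiniteField

variable {K : Type*} [Field K] [Fintype K]

theorem prod_univ_X_sub_C :
    ∏ a : K, (Polynomial.X - Polynomial.C a) =
      (Polynomial.X ^ Fintype.card K - Polynomial.X : Polynomial K) := by
  have hq : 1 < Fintype.card K := Fintype.one_lt_card
  have hmonic : (Polynomial.X ^ Fintype.card K - Polynomial.X : Polynomial K).Monic :=
    Polynomial.monic_X_pow_sub (by rw [Polynomial.degree_X]; exact_mod_cast hq)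
  have hprod := Polynomial.prod_multiset_X_sub_C_of_monic_of_roots_card_eq hmonic
    (by rw [roots_X_pow_card_sub_X, X_pow_card_sub_X_natDegree_eq K hq]; rfl)
  rwa [roots_X_pow_card_sub_X] at hprod

theorem prod_univ_X_zero_sub_C_mul_X_one :
    ∏ a : K, (X 0 - C a * X 1 : MvPolynomial (Fin 2) K) =
      X 0 ^ Fintype.card K - X 1 ^ (Fintype.card K - 1) * X 0 := by
  have hq : Fintype.card K ≠ 0 := Fintype.card_ne_zero
  have hhom (a : K) : (Polynomial.X - Polynomial.C a).homogenize 1 = X 0 - C a * X 1 := by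
    rw [Polynomial.homogenize_sub, Polynomial.homogenize_X one_ne_zero, Polynomial.homogenize_C]
    simp
  have h := Polynomial.homogenize_finsetProd (s := univ)
    (p := fun a : K => Polynomial.X - Polynomial.C a) (n := fun _ => 1)
    fun a _ => (Polynomial.natDegree_X_sub_C a).le
  simp only [prod_univ_X_sub_C, hhom, sum_const, card_univ, smul_eq_mul, mul_one] at h
  rw [← h, Polynomial.homogenize_sub, Polynomial.homogenize_X_pow le_rfl,
    Polynomial.homogenize_X hq]
  simp [mul_comm]

end FiniteField

namespace ZMod

variable {M : Type*} [CommMonoid M] {n : ℕ} [NeZero n]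

theorem prod_range_natCast (g : ZMod n → M) :
    ∏ k ∈ range n, g k = ∏ x, g x :=
  prod_nbij' (↑) val (fun _ _ => mem_univ _) (fun x _ => mem_range.2 x.val_lt)
    (fun _ hk => val_cast_of_lt (mem_range.1 hk)) (fun x _ => natCast_zmod_val x) fun _ _ => rfl

theorem prod_Ico_natCast (g : ZMod n → M) (a : ℕ) :
    ∏ k ∈ Ico a (a + n), g k = ∏ x, g x := by
  rw [prod_Ico_eq_prod_range, Nat.add_sub_cancel_left,
    ← Equiv.prod_comp (Equiv.addLeft (a : ZMod n)), ← prod_range_natCast]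
  simp

theorem prod_Ico_natCast_mul (g : ZMod n → M) (a m : ℕ) :
    ∏ k ∈ Ico a (a + m * n), g k = (∏ x, g x) ^ m := by
  induction m with
  | zero => simp
  | succ m ih =>
    rw [pow_succ, ← ih, ← prod_Ico_natCast g (a + m * n), add_mul, one_mul, ← add_assoc,
      prod_Ico_consecutive _ (Nat.le_add_right _ _) (Nat.le_add_right _ _)]

end ZMod

theorem prod_linear_factors_split_general (p : ℕ) (hp : p.Prime) (d α β : ℕ)
    (hd : d = α * p + β) (hβ1 : 1 ≤ β) (ℓ : ℤ) :
    (∏ k ∈ Finset.Icc 1 (d - 1),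
        (X 0 + C ((ℓ - (k : ℤ) : ℤ) : ZMod p) * X 1)
          : MvPolynomial (Fin 2) (ZMod p))
      = (X 0 ^ p - X 1 ^ (p - 1) * X 0) ^ α *
          ∏ j ∈ Finset.Icc 1 (β - 1),
            (X 0 + C ((ℓ - (j : ℤ) : ℤ) : ZMod p) * X 1) := by
  have := Fact.mk hp
  have hIcc (n : ℕ) (hn : 1 ≤ n) : Icc 1 (n - 1) = Ico 1 n :=
    Icc_sub_one_right_eq_Ico_of_not_isMin (by simpa using Nat.one_le_iff_ne_zero.1 hn) 1
  have hblock : ∏ k ∈ Ico β (β + α * p), (X 0 + C ((ℓ - (k : ℤ) : ℤ) : ZMod p) * X 1) =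
      (X 0 ^ p - X 1 ^ (p - 1) * X 0 : MvPolynomial (Fin 2) (ZMod p)) ^ α := by
    push_cast
    rw [ZMod.prod_Ico_natCast_mul (fun x => X 0 + C ((ℓ : ZMod p) - x) * X 1),
      ← Equiv.prod_comp (Equiv.addRight (ℓ : ZMod p))]
    simpa [ZMod.card, sub_eq_add_neg] using
      congrArg (· ^ α) (FiniteField.prod_univ_X_zero_sub_C_mul_X_one (K := ZMod p))
  rw [hIcc d (by omega), hIcc β hβ1, hd, add_comm (α * p), ← hblock,
    ← prod_Ico_consecutive _ hβ1 (Nat.le_add_right _ _)]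
  exact mul_comm _ _

/-- For a prime `p`, `d = α·p + β` with `1 ≤ β ≤ p-1`, and any `ℓ ∈ ℤ`, in `𝔽_p[x,t]`:
`∏_{k=1}^{d-1} (x + (ℓ-k)·t) = (x^p - t^{p-1}·x)^α · ∏_{j=1}^{β-1} (x + (ℓ-j)·t)`. -/
theorem prod_linear_factors_split (p : ℕ) (hp : p.Prime) (d α β : ℕ)
    (hd : d = α * p + β) (hβ1 : 1 ≤ β) (hβ2 : β ≤ p - 1) (ℓ : ℤ) :
    (∏ k ∈ Finset.Icc 1 (d - 1),
        (X 0 + C ((ℓ - (k : ℤ) : ℤ) : ZMod p) * X 1)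
          : MvPolynomial (Fin 2) (ZMod p))
      = (X 0 ^ p - X 1 ^ (p - 1) * X 0) ^ α *
          ∏ j ∈ Finset.Icc 1 (β - 1),
            (X 0 + C ((ℓ - (j : ℤ) : ℤ) : ZMod p) * X 1) :=
  prod_linear_factors_split_general p hp d α β hd hβ1 ℓ
end

section
/- Let p be an odd prime and 0 ≤ m ≤ p−1. Define polynomials A(q) = ∑_{d=0}^{p−m} C(p−m−1, p−m−d)·C(p−m, d)·q^d and B(q) = ∑_{d=0}^{p−m} C(p−m, p−m−d)·C(p−m−1, d)·q^d in 𝔽_p[q], where C(n,r) are binomial coefficients reduced mod p (and C(n,r) = 0 for r < 0 or r > n). Set Ĩ(q) = (1−q)^{2m}·(A(q), B(q)) ∈ 𝔽_p[q]². Then Ĩ satisfies the mod-p quantum differential equation of T*ℙ¹ in the stable basis, specialized at h/t = m: namely, (1−q)·q·(dĨ/dq) = −m·( (1−q)·N + q·J )·Ĩ as an identity in 𝔽_p[q]², where N is the 2×2 matrix with (2,1)-entry 1 and all other entries 0, and J is the 2×2 all-ones matrix. -/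
/-!
Put `n = p - m`, so that `-m = n` in `𝔽_p`. Over any commutative ring the components
`A = A_n`, `B = B_n` satisfy the first-order system `(1 - q) A' = n (B - A)` and
`(1 - q) q B' = n (A - q B)`; coefficientwise this is Pascal's rule together with
`(k + 1) C(n, k + 1) = n C(n - 1, k)` and `(n - k) C(n, k) = n C(n - 1, k)`.
Since `(1 - q) ((1 - q)^{2k})' = -2k (1 - q)^{2k}`, multiplying by `(1 - q)^{2k}` turns the system
into the quantum differential equation at `h/t = k` exactly when `n + k = 0` in the ring.
-/

open Polynomial Finset

noncomputable def varA (p m : ℕ) : Polynomial (ZMod p) :=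
  ∑ d ∈ Finset.range (p - m + 1),
    Polynomial.C (((p - m - 1).choose (p - m - d) * (p - m).choose d : ℕ) : ZMod p) *
      Polynomial.X ^ d

noncomputable def varB (p m : ℕ) : Polynomial (ZMod p) :=
  ∑ d ∈ Finset.range (p - m + 1),
    Polynomial.C (((p - m).choose (p - m - d) * (p - m - 1).choose d : ℕ) : ZMod p) *
      Polynomial.X ^ d

/-- The arithmetic flat section `Ĩ(q) = (1-q)^{2m}·(A(q), B(q))`. -/
noncomputable def varI (p m : ℕ) : Fin 2 → Polynomial (ZMod p) :=
  ![(1 - Polynomial.X) ^ (2 * m) * varA p m, (1 - Polynomial.X) ^ (2 * m) * varB p m]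

noncomputable def matN (p : ℕ) : Matrix (Fin 2) (Fin 2) (Polynomial (ZMod p)) :=
  !![0, 0; 1, 0]

noncomputable def matJ (p : ℕ) : Matrix (Fin 2) (Fin 2) (Polynomial (ZMod p)) :=
  !![1, 1; 1, 1]

namespace Polynomial

variable {R : Type*}

theorem coeff_sum_range_C_mul_X_pow [Semiring R] {n : ℕ} {c : ℕ → R}
    (hc : ∀ d, n < d → c d = 0) (d : ℕ) :
    (∑ i ∈ range (n + 1), C (c i) * X ^ i).coeff d = c d := by
  simp only [finsetSum_coeff, coeff_C_mul_X_pow, Finset.sum_ite_eq, mem_range]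
  split_ifs with hd
  · rfl
  · exact (hc d (by omega)).symm

theorem coeff_X_mul_derivative [Semiring R] (f : R[X]) (d : ℕ) :
    (X * derivative f).coeff d = d * f.coeff d := by
  cases d with
  | zero => simp
  | succ d => rw [coeff_X_mul, coeff_derivative, ← Nat.cast_succ, Nat.cast_comm]

theorem mul_derivative_pow [CommSemiring R] (f : R[X]) (j : ℕ) :
    f * derivative (f ^ j) = j * derivative f * f ^ j := by
  cases j with
  | zero => simp
  | succ j => rw [derivative_pow_succ, ← Nat.cast_succ, C_eq_natCast]; ring

end Polynomial

theorem Nat.choose_sub_mul_eq {n k x : ℕ} (hx : n < k → x = 0) :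
    n.choose (n - k) * x = n.choose k * x := by
  rcases le_or_gt k n with hk | hk
  · rw [Nat.choose_symm hk]
  · simp [hx hk]

theorem Nat.cast_choose_succ_mul_sub {R : Type*} [Ring R] (s k : ℕ) :
    ((s + 1).choose k : R) * (s + 1 - k) = s.choose k * (s + 1) := by
  rcases le_or_gt k (s + 1) with hk | hk
  · have h := congrArg (Nat.cast : ℕ → R) (Nat.choose_mul_succ_eq s k)
    push_cast [hk] at h
    exact h.symm
  · simp [Nat.choose_eq_zero_of_lt hk, Nat.choose_eq_zero_of_lt (by omega : s < k)]

section FlatSection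

variable (R : Type*)

/-- `varA p m` is definitionally `flatSectionA (ZMod p) (p - m)`; likewise for `varB`, `varI`. -/
noncomputable def flatSectionA [Semiring R] (n : ℕ) : R[X] :=
  ∑ d ∈ range (n + 1), C (((n - 1).choose (n - d) * n.choose d : ℕ) : R) * X ^ d

noncomputable def flatSectionB [Semiring R] (n : ℕ) : R[X] :=
  ∑ d ∈ range (n + 1), C ((n.choose (n - d) * (n - 1).choose d : ℕ) : R) * X ^ d

noncomputable def flatSection [Ring R] (n k : ℕ) : Fin 2 → R[X] :=
  ![(1 - X) ^ (2 * k) * flatSectionA R n, (1 - X) ^ (2 * k) * flatSectionB R n]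

section Semiring

variable [Semiring R]

theorem coeff_flatSectionA_zero (s : ℕ) : (flatSectionA R (s + 1)).coeff 0 = 0 := by
  rw [flatSectionA, coeff_sum_range_C_mul_X_pow fun d hd => by simp [Nat.choose_eq_zero_of_lt hd]]
  simp

theorem coeff_flatSectionA_succ (s e : ℕ) :
    (flatSectionA R (s + 1)).coeff (e + 1) = (s.choose e * (s + 1).choose (e + 1) : ℕ) := by
  rw [flatSectionA, coeff_sum_range_C_mul_X_pow fun d hd => by simp [Nat.choose_eq_zero_of_lt hd]]
  simp only [Nat.add_sub_cancel, Nat.add_sub_add_right]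
  rw [Nat.choose_sub_mul_eq fun he => Nat.choose_eq_zero_of_lt (by omega)]

theorem coeff_flatSectionB (s e : ℕ) :
    (flatSectionB R (s + 1)).coeff e = ((s + 1).choose e * s.choose e : ℕ) := by
  rw [flatSectionB, coeff_sum_range_C_mul_X_pow fun d hd => by
    simp [Nat.choose_eq_zero_of_lt (by omega : s < d)]]
  rw [Nat.add_sub_cancel, Nat.choose_sub_mul_eq fun he => Nat.choose_eq_zero_of_lt (by omega)]

end Semiring

variable {R} [CommRing R]

theorem one_sub_X_mul_derivative_flatSectionA (n : ℕ) :
    (1 - X) * derivative (flatSectionA R n) =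
      (n : R[X]) * (flatSectionB R n - flatSectionA R n) := by
  cases n with
  | zero => simp [flatSectionA, flatSectionB]
  | succ s =>
    ext e
    rw [sub_mul, one_mul, coeff_sub, coeff_X_mul_derivative, coeff_derivative, coeff_natCast_mul,
      coeff_sub]
    cases e with
    | zero => simp [coeff_flatSectionA_zero, coeff_flatSectionA_succ, coeff_flatSectionB]
    | succ f =>
      rw [coeff_flatSectionA_succ, coeff_flatSectionA_succ, coeff_flatSectionB]
      have h1 : ((s : R) + 1) * s.choose f = (s + 1).choose (f + 1) * (f + 1) := by
        norm_cast; rw [Nat.add_one_mul_choose_eq]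
      have h2 : ((s : R) + 1) * s.choose (f + 1) = (s + 1).choose (f + 2) * (f + 2) := by
        norm_cast; rw [Nat.add_one_mul_choose_eq]
      have pascal : ((s + 1).choose (f + 1) : R) = s.choose f + s.choose (f + 1) := by
        rw [Nat.choose_succ_succ', Nat.cast_add]
      push_cast at h1 h2 ⊢
      linear_combination (s.choose f : R) * h1 - (s.choose (f + 1) : R) * h2
        - ((s : R) + 1) * (s.choose (f + 1) - s.choose f) * pascal

theorem one_sub_X_mul_X_mul_derivative_flatSectionB (n : ℕ) :
    (1 - X) * X * derivative (flatSectionB R n) =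
      (n : R[X]) * (flatSectionA R n - X * flatSectionB R n) := by
  cases n with
  | zero => simp [flatSectionA, flatSectionB]
  | succ s =>
    ext e
    rw [mul_assoc, sub_mul, one_mul, coeff_sub, coeff_natCast_mul, coeff_sub]
    cases e with
    | zero => simp [coeff_flatSectionA_zero]
    | succ f =>
      rw [coeff_X_mul_derivative, coeff_X_mul, coeff_X_mul_derivative, coeff_X_mul,
        coeff_flatSectionA_succ, coeff_flatSectionB, coeff_flatSectionB]
      have h1 : ((s : R) + 1) * s.choose f = (s + 1).choose (f + 1) * (f + 1) := by
        norm_cast; rw [Nat.add_one_mul_choose_eq]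
      have h2 := Nat.cast_choose_succ_mul_sub (R := R) s f
      have pascal : ((s + 1).choose (f + 1) : R) = s.choose f + s.choose (f + 1) := by
        rw [Nat.choose_succ_succ', Nat.cast_add]
      push_cast at h1 ⊢
      linear_combination -(s.choose (f + 1) : R) * h1 + (s.choose f : R) * h2
        - ((s : R) + 1) * s.choose f * pascal

theorem flatSection_solves_qde {n k : ℕ} (h : (n : R) + k = 0) (i : Fin 2) :
    (1 - X) * X * derivative (flatSection R n k i) =
      C (-(k : R)) *
        Matrix.mulVec
          ((1 - X : R[X]) • !![0, 0; 1, 0] + (X : R[X]) • !![1, 1; 1, 1] :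
            Matrix (Fin 2) (Fin 2) R[X])
          (flatSection R n k) i := by
  have hk : (n : R[X]) + k = 0 := by
    rw [← map_natCast C, ← map_natCast C, ← map_add, h, map_zero]
  have hA := one_sub_X_mul_derivative_flatSectionA (R := R) n
  have hB := one_sub_X_mul_X_mul_derivative_flatSectionB (R := R) n
  have hP : (1 - X) * derivative ((1 - X : R[X]) ^ (2 * k)) =
      -(2 * k : R[X]) * (1 - X) ^ (2 * k) := by
    rw [mul_derivative_pow]; simp
  set A := flatSectionA R n
  set B := flatSectionB R n
  set P := (1 - X : R[X]) ^ (2 * k)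
  fin_cases i <;>
    simp only [flatSection, Fin.zero_eta, Fin.mk_one, Fin.isValue, Matrix.cons_val_zero,
      Matrix.cons_val_one, Matrix.cons_val_fin_one, derivative_mul, map_neg, map_natCast,
      Matrix.mulVec, dotProduct, Matrix.smul_of, Matrix.smul_cons, smul_eq_mul, mul_zero,
      Matrix.smul_empty, mul_one, Matrix.add_apply, Matrix.of_apply, Matrix.cons_val',
      Fin.sum_univ_two, sub_add_cancel, one_mul, zero_add, neg_mul]
  · linear_combination (X * A) * hP + (X * P) * hA + X * P * (B - A) * hk
  · linear_combination (X * B) * hP + P * hB + P * (A - X * B) * hk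

end FlatSection

theorem arithmetic_flat_section_solves_QDE_general (p m : ℕ) (hm : m ≤ p - 1) :
    ∀ i : Fin 2,
      ((1 : Polynomial (ZMod p)) - Polynomial.X) * Polynomial.X * Polynomial.derivative (varI p m i)
        = Polynomial.C (-(m : ZMod p)) *
            Matrix.mulVec (((1 : Polynomial (ZMod p)) - Polynomial.X) • matN p + (Polynomial.X : Polynomial (ZMod p)) • matJ p)
              (varI p m) i := by
  have h : ((p - m : ℕ) : ZMod p) + m = 0 := by
    rw [← Nat.cast_add, Nat.sub_add_cancel (by omega), ZMod.natCast_self]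
  exact flatSection_solves_qde h

/-- Varchenko's arithmetic flat section solves the mod-`p` quantum differential
equation of `T*ℙ¹` in the stable basis, specialized at `h/t = m`:
`(1-q)·q·Ĩ' = -m·((1-q)·N + q·J)·Ĩ`. -/
theorem arithmetic_flat_section_solves_QDE (p m : ℕ) (hp : p.Prime) (hodd : p ≠ 2)
    (hm : m ≤ p - 1) :
    ∀ i : Fin 2,
      ((1 : Polynomial (ZMod p)) - Polynomial.X) * Polynomial.X * Polynomial.derivative (varI p m i)
        = Polynomial.C (-(m : ZMod p)) *
            Matrix.mulVec (((1 : Polynomial (ZMod p)) - Polynomial.X) • matN p + (Polynomial.X : Polynomial (ZMod p)) • matJ p)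
              (varI p m) i :=
  arithmetic_flat_section_solves_QDE_general p m hm
end

section
/- Let p be an odd prime and m ∈ {1, …, p−1}. For integers ℓ, d with 0 ≤ ℓ and 1 ≤ d ≤ p−1, define in 𝔽_p: a(ℓ, d) = (1/d!)·(∏_{k=0}^{d−1}(m − ℓ + k))·C(d, ℓ) and b(ℓ, d) = (1/d!)·(∏_{k=1}^{d}(m − ℓ + k))·C(d, ℓ), with the conventions a(−1, d) = 0, b(ℓ, d) = a(ℓ, d) = 0 when ℓ > d, and a(ℓ,0) = b(ℓ,0) = [ℓ = 0]. For 1 ≤ d ≤ p−1 define the 2×2 matrix Σ_d = ∑_{ℓ=0}^{d} [[ −a(ℓ−1, d−1)·b(ℓ, d), −a(ℓ−1, d−1)·b(ℓ, d−1) ], [ a(ℓ, d)·b(ℓ, d), a(ℓ, d)·b(ℓ, d−1) ]], and set Σ_0 = [[0,0],[1,0]] and Σ_p = [[0,1],[1,0]]. Let I(q) = ( ∑_{d=0}^{p−m} C(p−m−1, d−1)·C(p−m, d)·q^d , ∑_{d=0}^{p−m} C(p−m, d)·C(p−m−1, d)·q^d ) ∈ 𝔽_p[q]². Then q^p·(Σ_0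 − Σ_p)·I(q) = (Σ_0 + Σ_1·q + ⋯ + Σ_{p−1}·q^{p−1})·I(q) as an identity in 𝔽_p[q]². -/
open Polynomial Finset

/-- `a(ℓ,d) = (1/d!)·(∏_{k=0}^{d-1}(m-ℓ+k))·C(d,ℓ)` in `𝔽_p`, with `a(ℓ,d) = 0` for `ℓ < 0`.
(For `d = 0` this gives `a(ℓ,0) = [ℓ = 0]`, and `C(d,ℓ) = 0` handles `ℓ > d`.) -/
noncomputable def qstA (p m : ℕ) (ℓ : ℤ) (d : ℕ) : ZMod p :=
  if ℓ < 0 then 0 else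
    ((d.factorial : ZMod p))⁻¹ *
      (∏ k ∈ Finset.range d, (((m : ℤ) - ℓ + (k : ℤ) : ℤ) : ZMod p)) *
      (d.choose ℓ.toNat : ZMod p)

/-- `b(ℓ,d) = (1/d!)·(∏_{k=1}^{d}(m-ℓ+k))·C(d,ℓ)` in `𝔽_p`, with `b(ℓ,d) = 0` for `ℓ < 0`. -/
noncomputable def qstB (p m : ℕ) (ℓ : ℤ) (d : ℕ) : ZMod p :=
  if ℓ < 0 then 0 else
    ((d.factorial : ZMod p))⁻¹ *
      (∏ k ∈ Finset.Icc 1 d, (((m : ℤ) - ℓ + (k : ℤ) : ℤ) : ZMod p)) *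
      (d.choose ℓ.toNat : ZMod p)

/-- The matrix `Σ_d` for `1 ≤ d ≤ p-1`, together with `Σ_0 = [[0,0],[1,0]]`. -/
noncomputable def qstSigma (p m : ℕ) (d : ℕ) : Matrix (Fin 2) (Fin 2) (ZMod p) :=
  if d = 0 then !![0, 0; 1, 0] else
    ∑ ℓ ∈ Finset.range (d + 1),
      !![ -qstA p m ((ℓ : ℤ) - 1) (d - 1) * qstB p m (ℓ : ℤ) d,
          -qstA p m ((ℓ : ℤ) - 1) (d - 1) * qstB p m (ℓ : ℤ) (d - 1);
          qstA p m (ℓ : ℤ) d * qstB p m (ℓ : ℤ) d,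
          qstA p m (ℓ : ℤ) d * qstB p m (ℓ : ℤ) (d - 1)]

/-- The arithmetic flat section
`I(q) = (∑ C(p-m-1, d-1)·C(p-m, d)·q^d, ∑ C(p-m, d)·C(p-m-1, d)·q^d)`
(with `C(p-m-1, d-1) = 0` for `d = 0`). -/
noncomputable def qstI (p m : ℕ) : Fin 2 → Polynomial (ZMod p) :=
  ![∑ d ∈ Finset.range (p - m + 1),
      Polynomial.C ((if d = 0 then 0 else
        ((p - m - 1).choose (d - 1) * (p - m).choose d : ℕ) : ZMod p)) * Polynomial.X ^ d,
    ∑ d ∈ Finset.range (p - m + 1),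
      Polynomial.C ((((p - m).choose d * (p - m - 1).choose d : ℕ) : ZMod p)) *
        Polynomial.X ^ d]


variable {R : Type*} [CommRing R]

lemma coeff_of_sum (c : ℕ → R) (M N : ℕ) :
    (∑ d ∈ range M, C (c d) * X ^ d).coeff N = if N < M then c N else 0 := by
  rw [finset_sum_coeff]
  simp only [coeff_C_mul, coeff_X_pow]
  rw [Finset.sum_congr rfl (fun d _ => by rw [mul_ite, mul_one, mul_zero])]
  rw [Finset.sum_congr rfl (fun d _ => by rw [show (if N = d then c d else 0) = if d = N then c d else 0 by simp [eq_comm]])]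
  rw [Finset.sum_ite_eq' (range M) N c]
  simp [Finset.mem_range]

lemma sum_range_ext (g : ℕ → R) (B M M' : ℕ) (hg : ∀ e, B ≤ e → g e = 0)
    (h1 : B ≤ M) (h2 : B ≤ M') :
    (∑ e ∈ range M, C (g e) * X ^ e) = ∑ e ∈ range M', C (g e) * X ^ e := by
  have key : ∀ M'', B ≤ M'' → (∑ e ∈ range M'', C (g e) * X ^ e)
      = ∑ e ∈ range B, C (g e) * X ^ e := by
    intro M'' h
    rw [← Finset.sum_subset (Finset.range_subset_range.2 h)]
    intro x _ hx
    rw [hg x (by simpa using hx)]; simp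
  rw [key M h1, key M' h2]

lemma cauchy_prod (f g : ℕ → R) (A B M : ℕ)
    (hf : ∀ ℓ, A ≤ ℓ → f ℓ = 0) (hg : ∀ e, B ≤ e → g e = 0)
    (hA : A ≤ M) (hB : B ≤ M) (hM : A + B ≤ M + 1) :
    (∑ d ∈ range M, C (∑ ℓ ∈ range (d + 1), f ℓ * g (d - ℓ)) * X ^ d)
      = (∑ ℓ ∈ range M, C (f ℓ) * X ^ ℓ) * (∑ e ∈ range M, C (g e) * X ^ e) := by
  ext N
  rw [coeff_of_sum, Polynomial.coeff_mul]
  have hL : ∀ x : ℕ, (∑ ℓ ∈ range M, C (f ℓ) * X ^ ℓ).coeff x = f x := by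
    intro x
    rw [coeff_of_sum]
    split_ifs with h
    · rfl
    · exact (hf x (le_trans hA (not_lt.1 h))).symm
  have hG : ∀ x : ℕ, (∑ e ∈ range M, C (g e) * X ^ e).coeff x = g x := by
    intro x
    rw [coeff_of_sum]
    split_ifs with h
    · rfl
    · exact (hg x (le_trans hB (not_lt.1 h))).symm
  have : ∑ x ∈ Finset.HasAntidiagonal.antidiagonal N,
      (∑ ℓ ∈ range M, C (f ℓ) * X ^ ℓ).coeff x.1 * (∑ e ∈ range M, C (g e) * X ^ e).coeff x.2
      = ∑ ℓ ∈ range (N + 1), f ℓ * g (N - ℓ) := by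
    rw [Finset.sum_congr rfl (fun x _ => by rw [hL, hG])]
    exact Finset.Nat.sum_antidiagonal_eq_sum_range_succ (fun i j => f i * g j) N
  rw [this]
  split_ifs with h
  · rfl
  · symm
    apply Finset.sum_eq_zero
    intro ℓ _
    by_cases hℓ : A ≤ ℓ
    · rw [hf ℓ hℓ, zero_mul]
    · rw [hg (N - ℓ) (by omega), mul_zero]

section
variable {p : ℕ} [Fact p.Prime]

lemma fac_ne_zero {d : ℕ} (hd : d < p) : (d.factorial : ZMod p) ≠ 0 := by
  rw [Ne, ZMod.natCast_eq_zero_iff]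
  intro h
  exact absurd ((Nat.Prime.dvd_factorial (Fact.out)).1 h) (by omega)

/-- `∏_{j<e} (N - j) = e! C(N,e)` in `ZMod p`. -/
lemma prodDesc (N e : ℕ) :
    (∏ j ∈ range e, ((N : ZMod p) - (j : ℕ))) =
      (e.factorial : ZMod p) * (N.choose e : ZMod p) := by
  by_cases h : e ≤ N
  · have : ∀ j ∈ range e, ((N : ZMod p) - (j : ℕ)) = ((N - j : ℕ) : ZMod p) := by
      intro j hj
      rw [Nat.cast_sub (by simp at hj; omega)]
    rw [Finset.prod_congr rfl this, ← Nat.cast_prod, ← Nat.descFactorial_eq_prod_range,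
      Nat.descFactorial_eq_factorial_mul_choose, Nat.cast_mul]
  · rw [Finset.prod_eq_zero (Finset.mem_range.2 (by omega : N < e))
      (by simp : ((N : ZMod p) - (N : ℕ)) = 0)]
    rw [Nat.choose_eq_zero_of_lt (by omega), Nat.cast_zero, mul_zero]

/-- `∏_{k<l} (M - l + k) = l! C(M-1,l)` in `ZMod p`, for `M ≥ 1`. -/
lemma prodLow (M l : ℕ) (hM : 1 ≤ M) :
    (∏ k ∈ range l, ((M : ZMod p) - (l : ℕ) + (k : ℕ))) =
      (l.factorial : ZMod p) * ((M - 1).choose l : ZMod p) := by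
  have := Finset.prod_range_reflect (fun k => ((M : ZMod p) - (l : ℕ) + (k : ℕ))) l
  rw [← this]
  have h2 : ∀ j ∈ range l, ((M : ZMod p) - (l : ℕ) + ((l - 1 - j : ℕ) : ℕ)) =
      (((M - 1 : ℕ)) : ZMod p) - (j : ℕ) := by
    intro j hj
    simp only [Finset.mem_range] at hj
    rw [Nat.cast_sub (by omega : j ≤ l - 1), Nat.cast_sub (by omega : 1 ≤ l),
      Nat.cast_sub (by omega : 1 ≤ M)]
    push_cast
    ring
  rw [Finset.prod_congr rfl h2, prodDesc]

/-- `∏_{j<e} (M + j) = (-1)^e e! C(p-M, e)` in `ZMod p`, for `1 ≤ M ≤ p`. -/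
lemma prodHigh (M e : ℕ) (hMp : M ≤ p) :
    (∏ j ∈ range e, ((M : ZMod p) + (j : ℕ))) =
      (-1) ^ e * (e.factorial : ZMod p) * ((p - M).choose e : ZMod p) := by
  have hMcast : (M : ZMod p) = -((p - M : ℕ) : ZMod p) := by
    have : ((p - M : ℕ) : ZMod p) + (M : ZMod p) = ((p : ℕ) : ZMod p) := by
      rw [← Nat.cast_add, Nat.sub_add_cancel hMp]
    rw [ZMod.natCast_self] at this
    linear_combination this
  have h2 : ∀ j ∈ range e, ((M : ZMod p) + (j : ℕ)) =
      -(((p - M : ℕ) : ZMod p) - (j : ℕ)) := by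
    intro j _
    rw [hMcast]; ring
  rw [Finset.prod_congr rfl h2]
  have h3 : ∀ x : ℕ, -(((p - M : ℕ) : ZMod p) - (x : ℕ)) =
      (-1) * (((p - M : ℕ) : ZMod p) - (x : ℕ)) := fun x => by ring
  rw [Finset.prod_congr rfl (fun x _ => h3 x), Finset.prod_mul_distrib,
    Finset.prod_const, Finset.card_range, prodDesc]
  ring

end



section
variable {p m : ℕ} [Fact p.Prime]

/-- Core product evaluation. -/
lemma prodSplit (M : ℕ) (hM : 1 ≤ M) (hMp : M ≤ p) {d l : ℕ} (hld : l ≤ d) :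
    (∏ k ∈ range d, ((M : ZMod p) - (l : ℕ) + (k : ℕ))) =
      ((l.factorial : ZMod p) * ((M - 1).choose l : ZMod p)) *
      ((-1) ^ (d - l) * ((d - l).factorial : ZMod p) * ((p - M).choose (d - l) : ZMod p)) := by
  rw [← Finset.prod_range_mul_prod_Ico _ hld, Finset.prod_Ico_eq_prod_range]
  rw [prodLow M l hM]
  have h : ∀ j ∈ range (d - l), ((M : ZMod p) - (l : ℕ) + ((l + j : ℕ) : ℕ)) =
      (M : ZMod p) + (j : ℕ) := by
    intro j _
    push_cast
    ring
  rw [Finset.prod_congr rfl h, prodHigh M (d - l) hMp]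

lemma qstA_eq (hm : 1 ≤ m) (hmp : m ≤ p) {d l : ℕ} (hd : d < p) (hld : l ≤ d) :
    qstA p m (l : ℤ) d =
      (-1) ^ (d - l) * ((m - 1).choose l : ZMod p) * ((p - m).choose (d - l) : ZMod p) := by
  rw [qstA, if_neg (by omega)]
  have hc : ∀ k ∈ range d, ((((m : ℤ) - (l : ℤ) + (k : ℤ) : ℤ)) : ZMod p) =
      ((m : ZMod p) - (l : ℕ) + (k : ℕ)) := by
    intro k _
    push_cast
    ring
  rw [Finset.prod_congr rfl hc, prodSplit m hm hmp hld, Int.toNat_natCast]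
  have hfac : (l.factorial * (d - l).factorial * d.choose l : ℕ) = d.factorial := by
    rw [← Nat.choose_mul_factorial_mul_factorial hld]
    ring
  have hne : (d.factorial : ZMod p) ≠ 0 := fac_ne_zero hd
  field_simp
  rw [← hfac]
  push_cast
  ring

lemma qstB_eq (hm : 1 ≤ m) (hmp : m + 1 ≤ p) {d l : ℕ} (hd : d < p) (hld : l ≤ d) :
    qstB p m (l : ℤ) d =
      (-1) ^ (d - l) * (m.choose l : ZMod p) * ((p - m - 1).choose (d - l) : ZMod p) := by
  rw [qstB, if_neg (by omega)]
  have hIcc : (∏ k ∈ Finset.Icc 1 d, (((m : ℤ) - (l : ℤ) + (k : ℤ) : ℤ) : ZMod p)) =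
      ∏ k ∈ range d, (((m + 1 : ℕ) : ZMod p) - (l : ℕ) + (k : ℕ)) := by
    rw [show Finset.Icc 1 d = Finset.Ico 1 (d + 1) by rfl, Finset.prod_Ico_eq_prod_range]
    apply Finset.prod_congr rfl
    intro k _
    push_cast
    ring
  rw [hIcc, prodSplit (m + 1) (by omega) hmp hld, Int.toNat_natCast]
  have hfac : (l.factorial * (d - l).factorial * d.choose l : ℕ) = d.factorial := by
    rw [← Nat.choose_mul_factorial_mul_factorial hld]
    ring
  have hne : (d.factorial : ZMod p) ≠ 0 := fac_ne_zero hd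
  have h1 : m + 1 - 1 = m := by omega
  have h2 : p - (m + 1) = p - m - 1 := by omega
  rw [h1, h2]
  field_simp
  rw [← hfac]
  push_cast
  ring

lemma qstA_zero {d : ℕ} {l : ℕ} (hld : d < l) : qstA p m (l : ℤ) d = 0 := by
  rw [qstA, if_neg (by omega), Int.toNat_natCast,
    Nat.choose_eq_zero_of_lt hld]
  simp

lemma qstB_zero {d : ℕ} {l : ℕ} (hld : d < l) : qstB p m (l : ℤ) d = 0 := by
  rw [qstB, if_neg (by omega), Int.toNat_natCast,
    Nat.choose_eq_zero_of_lt hld]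
  simp

lemma qstA_neg {d : ℕ} {ℓ : ℤ} (h : ℓ < 0) : qstA p m ℓ d = 0 := by
  rw [qstA, if_pos h]

end


noncomputable def cJ (p m : ℕ) (ℓ : ℕ) : ZMod p := (((m - 1).choose ℓ * m.choose ℓ : ℕ) : ZMod p)

noncomputable def cK (p m : ℕ) (ℓ : ℕ) : ZMod p :=
  if ℓ = 0 then 0 else (((m - 1).choose (ℓ - 1) * m.choose ℓ : ℕ) : ZMod p)

noncomputable def i1c (p m : ℕ) (e : ℕ) : ZMod p :=
  if e = 0 then 0 else (((p - m - 1).choose (e - 1) * (p - m).choose e : ℕ) : ZMod p)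

noncomputable def i2c (p m : ℕ) (e : ℕ) : ZMod p :=
  (((p - m).choose e * (p - m - 1).choose e : ℕ) : ZMod p)

section
variable {p m : ℕ} [Fact p.Prime] (hm : 1 ≤ m) (hmp : m + 1 ≤ p)
include hm hmp

lemma entry10 {d : ℕ} (hd : d < p) :
    qstSigma p m d 1 0 = ∑ ℓ ∈ range (d + 1), cJ p m ℓ * i2c p m (d - ℓ) := by
  by_cases h0 : d = 0
  · subst h0
    simp [qstSigma, cJ, i2c]
  · rw [qstSigma, if_neg h0, Matrix.sum_apply]
    apply Finset.sum_congr rfl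
    intro ℓ hℓ
    rw [Finset.mem_range] at hℓ
    have hld : ℓ ≤ d := by omega
    simp only [Matrix.cons_val', Matrix.cons_val_one, Matrix.cons_val_zero,
      Matrix.empty_val', Matrix.cons_val_fin_one, Matrix.head_cons, Matrix.of_apply,
      Matrix.head_fin_const]
    rw [qstA_eq hm (by omega) hd hld, qstB_eq hm hmp hd hld]
    have hs : ((-1 : ZMod p) ^ (d - ℓ)) * ((-1 : ZMod p) ^ (d - ℓ)) = 1 := by
      rw [← mul_pow]; norm_num
    calc ((-1 : ZMod p) ^ (d - ℓ) * ((m - 1).choose ℓ : ZMod p) * ((p - m).choose (d - ℓ) : ZMod p)) *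
          ((-1 : ZMod p) ^ (d - ℓ) * (m.choose ℓ : ZMod p) * ((p - m - 1).choose (d - ℓ) : ZMod p))
        = (((-1 : ZMod p) ^ (d - ℓ)) * ((-1 : ZMod p) ^ (d - ℓ))) *
          ((((m - 1).choose ℓ : ZMod p) * (m.choose ℓ : ZMod p)) *
           (((p - m).choose (d - ℓ) : ZMod p) * ((p - m - 1).choose (d - ℓ) : ZMod p))) := by ring
      _ = cJ p m ℓ * i2c p m (d - ℓ) := by rw [hs, one_mul, cJ, i2c]; push_cast; ring

lemma entry11 {d : ℕ} (hd : d < p) :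
    qstSigma p m d 1 1 = -∑ ℓ ∈ range (d + 1), cJ p m ℓ * i1c p m (d - ℓ) := by
  by_cases h0 : d = 0
  · subst h0
    simp [qstSigma, cJ, i1c]
  · rw [qstSigma, if_neg h0, Matrix.sum_apply, ← Finset.sum_neg_distrib]
    apply Finset.sum_congr rfl
    intro ℓ hℓ
    rw [Finset.mem_range] at hℓ
    have hld : ℓ ≤ d := by omega
    simp only [Matrix.cons_val', Matrix.cons_val_one, Matrix.cons_val_zero,
      Matrix.empty_val', Matrix.cons_val_fin_one, Matrix.head_cons, Matrix.of_apply,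
      Matrix.head_fin_const]
    by_cases hcase : ℓ = d
    · subst hcase
      rw [qstB_zero (by omega), i1c, if_pos (by omega)]
      simp
    · have hld1 : ℓ ≤ d - 1 := by omega
      rw [qstA_eq hm (by omega) hd hld, qstB_eq hm hmp (by omega) hld1]
      have he : d - 1 - ℓ = d - ℓ - 1 := by omega
      have hsplit : d - ℓ = (d - ℓ - 1) + 1 := by omega
      have hs : ((-1 : ZMod p) ^ (d - ℓ - 1)) * ((-1 : ZMod p) ^ (d - ℓ - 1)) = 1 := by
        rw [← mul_pow]; norm_num
      rw [he, hsplit, pow_succ]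
      rw [i1c, if_neg (by omega)]
      have h1 : (d - ℓ - 1) + 1 - 1 = d - ℓ - 1 := by omega
      rw [h1]
      calc ((-1 : ZMod p) ^ (d - ℓ - 1) * -1 * ((m - 1).choose ℓ : ZMod p) * ((p - m).choose (d - ℓ - 1 + 1) : ZMod p)) *
            ((-1 : ZMod p) ^ (d - ℓ - 1) * (m.choose ℓ : ZMod p) * ((p - m - 1).choose (d - ℓ - 1) : ZMod p))
          = -((((-1 : ZMod p) ^ (d - ℓ - 1)) * ((-1 : ZMod p) ^ (d - ℓ - 1))) *
            ((((m - 1).choose ℓ : ZMod p) * (m.choose ℓ : ZMod p)) *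
             (((p - m - 1).choose (d - ℓ - 1) : ZMod p) * ((p - m).choose (d - ℓ - 1 + 1) : ZMod p)))) := by
            ring
        _ = -(cJ p m ℓ * (((p - m - 1).choose (d - ℓ - 1) * (p - m).choose (d - ℓ - 1 + 1) : ℕ) : ZMod p)) := by
            rw [hs, one_mul, cJ]; push_cast; ring

lemma entry00 {d : ℕ} (hd : d < p) :
    qstSigma p m d 0 0 = -∑ ℓ ∈ range (d + 1), cK p m ℓ * i2c p m (d - ℓ) := by
  by_cases h0 : d = 0
  · subst h0
    simp [qstSigma, cK]
  · rw [qstSigma, if_neg h0, Matrix.sum_apply, ← Finset.sum_neg_distrib]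
    apply Finset.sum_congr rfl
    intro ℓ hℓ
    rw [Finset.mem_range] at hℓ
    have hld : ℓ ≤ d := by omega
    simp only [Matrix.cons_val', Matrix.cons_val_one, Matrix.cons_val_zero,
      Matrix.empty_val', Matrix.cons_val_fin_one, Matrix.head_cons, Matrix.of_apply,
      Matrix.head_fin_const]
    by_cases hcase : ℓ = 0
    · subst hcase
      rw [show ((0 : ℕ) : ℤ) - 1 = (-1 : ℤ) by norm_num, qstA_neg (by norm_num)]
      rw [cK, if_pos rfl]
      simp
    · have hcast : ((ℓ : ℤ) - 1) = ((ℓ - 1 : ℕ) : ℤ) := by omega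
      rw [hcast, qstA_eq hm (by omega) (by omega : d - 1 < p) (by omega : ℓ - 1 ≤ d - 1),
        qstB_eq hm hmp hd hld]
      have he : d - 1 - (ℓ - 1) = d - ℓ := by omega
      rw [he]
      have hs : ((-1 : ZMod p) ^ (d - ℓ)) * ((-1 : ZMod p) ^ (d - ℓ)) = 1 := by
        rw [← mul_pow]; norm_num
      rw [cK, if_neg hcase, i2c]
      calc -((-1 : ZMod p) ^ (d - ℓ) * ((m - 1).choose (ℓ - 1) : ZMod p) * ((p - m).choose (d - ℓ) : ZMod p)) *
            ((-1 : ZMod p) ^ (d - ℓ) * (m.choose ℓ : ZMod p) * ((p - m - 1).choose (d - ℓ) : ZMod p))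
          = -((((-1 : ZMod p) ^ (d - ℓ)) * ((-1 : ZMod p) ^ (d - ℓ))) *
            ((((m - 1).choose (ℓ - 1) : ZMod p) * (m.choose ℓ : ZMod p)) *
             (((p - m).choose (d - ℓ) : ZMod p) * ((p - m - 1).choose (d - ℓ) : ZMod p)))) := by ring
        _ = -((((m - 1).choose (ℓ - 1) * m.choose ℓ : ℕ) : ZMod p) *
              (((p - m).choose (d - ℓ) * (p - m - 1).choose (d - ℓ) : ℕ) : ZMod p)) := by
            rw [hs, one_mul]; push_cast; ring

lemma entry01 {d : ℕ} (hd : d < p) :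
    qstSigma p m d 0 1 = ∑ ℓ ∈ range (d + 1), cK p m ℓ * i1c p m (d - ℓ) := by
  by_cases h0 : d = 0
  · subst h0
    simp [qstSigma, cK]
  · rw [qstSigma, if_neg h0, Matrix.sum_apply]
    apply Finset.sum_congr rfl
    intro ℓ hℓ
    rw [Finset.mem_range] at hℓ
    have hld : ℓ ≤ d := by omega
    simp only [Matrix.cons_val', Matrix.cons_val_one, Matrix.cons_val_zero,
      Matrix.empty_val', Matrix.cons_val_fin_one, Matrix.head_cons, Matrix.of_apply,
      Matrix.head_fin_const]
    by_cases hcase : ℓ = 0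
    · subst hcase
      rw [show ((0 : ℕ) : ℤ) - 1 = (-1 : ℤ) by norm_num, qstA_neg (by norm_num)]
      rw [cK, if_pos rfl]
      simp
    · by_cases hcase2 : ℓ = d
      · subst hcase2
        rw [qstB_zero (by omega), i1c, if_pos (by omega)]
        simp
      · have hcast : ((ℓ : ℤ) - 1) = ((ℓ - 1 : ℕ) : ℤ) := by omega
        rw [hcast, qstA_eq hm (by omega) (by omega : d - 1 < p) (by omega : ℓ - 1 ≤ d - 1),
          qstB_eq hm hmp (by omega : d - 1 < p) (by omega : ℓ ≤ d - 1)]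
        have he1 : d - 1 - (ℓ - 1) = d - ℓ := by omega
        have he2 : d - 1 - ℓ = d - ℓ - 1 := by omega
        rw [he1, he2]
        have hsplit : d - ℓ = (d - ℓ - 1) + 1 := by omega
        have hs : ((-1 : ZMod p) ^ (d - ℓ - 1)) * ((-1 : ZMod p) ^ (d - ℓ - 1)) = 1 := by
          rw [← mul_pow]; norm_num
        rw [hsplit, pow_succ, cK, if_neg hcase, i1c, if_neg (by omega)]
        have h1 : (d - ℓ - 1) + 1 - 1 = d - ℓ - 1 := by omega
        rw [h1]
        calc -((-1 : ZMod p) ^ (d - ℓ - 1) * -1 * ((m - 1).choose (ℓ - 1) : ZMod p) * ((p - m).choose (d - ℓ - 1 + 1) : ZMod p)) *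
              ((-1 : ZMod p) ^ (d - ℓ - 1) * (m.choose ℓ : ZMod p) * ((p - m - 1).choose (d - ℓ - 1) : ZMod p))
            = (((-1 : ZMod p) ^ (d - ℓ - 1)) * ((-1 : ZMod p) ^ (d - ℓ - 1))) *
              ((((m - 1).choose (ℓ - 1) : ZMod p) * (m.choose ℓ : ZMod p)) *
               (((p - m - 1).choose (d - ℓ - 1) : ZMod p) * ((p - m).choose (d - ℓ - 1 + 1) : ZMod p))) := by ring
          _ = (((m - 1).choose (ℓ - 1) * m.choose ℓ : ℕ) : ZMod p) *
              (((p - m - 1).choose (d - ℓ - 1) * (p - m).choose (d - ℓ - 1 + 1) : ℕ) : ZMod p) := by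
              rw [hs, one_mul]; push_cast; ring

end

noncomputable def qstP (p m : ℕ) (i j : Fin 2) : Polynomial (ZMod p) :=
  ∑ d ∈ range p, C (qstSigma p m d i j) * X ^ d

noncomputable def Jpoly (p m : ℕ) : Polynomial (ZMod p) := ∑ ℓ ∈ range (p + 1), C (cJ p m ℓ) * X ^ ℓ
noncomputable def Kpoly (p m : ℕ) : Polynomial (ZMod p) := ∑ ℓ ∈ range (p + 1), C (cK p m ℓ) * X ^ ℓ
noncomputable def I1e (p m : ℕ) : Polynomial (ZMod p) := ∑ e ∈ range (p + 1), C (i1c p m e) * X ^ e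
noncomputable def I2e (p m : ℕ) : Polynomial (ZMod p) := ∑ e ∈ range (p + 1), C (i2c p m e) * X ^ e

section
variable {p m : ℕ} [Fact p.Prime] (hm : 1 ≤ m) (hmp : m + 1 ≤ p)

include hm in
lemma hcJ : ∀ ℓ, m ≤ ℓ → cJ p m ℓ = 0 := by
  intro ℓ h
  rw [cJ, Nat.choose_eq_zero_of_lt (show m - 1 < ℓ by omega)]
  simp

lemma hcK : ∀ ℓ, m + 1 ≤ ℓ → cK p m ℓ = 0 := by
  intro ℓ h
  rw [cK, if_neg (by omega), Nat.choose_eq_zero_of_lt (show m < ℓ by omega)]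
  simp

lemma hi1 : ∀ e, p - m + 1 ≤ e → i1c p m e = 0 := by
  intro e h
  rw [i1c, if_neg (by omega), Nat.choose_eq_zero_of_lt (show p - m < e by omega)]
  simp

include hmp in
lemma hi2 : ∀ e, p - m ≤ e → i2c p m e = 0 := by
  intro e h
  rw [i2c, Nat.choose_eq_zero_of_lt (show p - m - 1 < e by omega)]
  simp

include hm hmp

lemma hP10 : qstP p m 1 0 = Jpoly p m * I2e p m := by
  rw [qstP, Finset.sum_congr rfl (fun d hd => by
    rw [entry10 hm hmp (Finset.mem_range.1 hd)])]
  rw [cauchy_prod (cJ p m) (i2c p m) m (p - m) p (hcJ hm) (hi2 hmp) (by omega) (by omega) (by omega)]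
  rw [Jpoly, I2e, sum_range_ext (cJ p m) m p (p + 1) (hcJ hm) (by omega) (by omega),
    sum_range_ext (i2c p m) (p - m) p (p + 1) (hi2 hmp) (by omega) (by omega)]

lemma hP11 : qstP p m 1 1 = -(Jpoly p m * I1e p m) := by
  rw [qstP, Finset.sum_congr rfl (fun d hd => by
    rw [entry11 hm hmp (Finset.mem_range.1 hd), map_neg, neg_mul]), Finset.sum_neg_distrib]
  rw [cauchy_prod (cJ p m) (i1c p m) m (p - m + 1) p (hcJ hm) hi1 (by omega) (by omega) (by omega)]
  rw [Jpoly, I1e, sum_range_ext (cJ p m) m p (p + 1) (hcJ hm) (by omega) (by omega),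
    sum_range_ext (i1c p m) (p - m + 1) p (p + 1) hi1 (by omega) (by omega)]

lemma hP00 : qstP p m 0 0 = -(Kpoly p m * I2e p m) := by
  rw [qstP, Finset.sum_congr rfl (fun d hd => by
    rw [entry00 hm hmp (Finset.mem_range.1 hd), map_neg, neg_mul]), Finset.sum_neg_distrib]
  rw [cauchy_prod (cK p m) (i2c p m) (m + 1) (p - m) p (hcK) (hi2 hmp) (by omega) (by omega) (by omega)]
  rw [Kpoly, I2e, sum_range_ext (cK p m) (m + 1) p (p + 1) hcK (by omega) (by omega),
    sum_range_ext (i2c p m) (p - m) p (p + 1) (hi2 hmp) (by omega) (by omega)]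

lemma sp1 : (∑ ℓ ∈ range (p + 1), cK p m ℓ * i1c p m (p - ℓ)) = 1 := by
  rw [Finset.sum_eq_single_of_mem m (Finset.mem_range.2 (by omega))]
  · rw [cK, if_neg (by omega), i1c, if_neg (by omega)]
    simp [Nat.choose_self]
  · intro b _ hb
    by_cases h0 : b = 0
    · subst h0; rw [cK, if_pos rfl, zero_mul]
    · by_cases h1 : m + 1 ≤ b
      · rw [hcK b h1, zero_mul]
      · rw [hi1 (p - b) (by omega), mul_zero]

lemma hP01 : qstP p m 0 1 = Kpoly p m * I1e p m - X ^ p := by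
  have hT : (∑ d ∈ range (p + 1), C (∑ ℓ ∈ range (d + 1), cK p m ℓ * i1c p m (d - ℓ)) * X ^ d)
      = Kpoly p m * I1e p m := by
    rw [cauchy_prod (cK p m) (i1c p m) (m + 1) (p - m + 1) (p + 1) hcK hi1
      (by omega) (by omega) (by omega)]
    rfl
  rw [qstP, Finset.sum_congr rfl (fun d hd => by
    rw [entry01 hm hmp (Finset.mem_range.1 hd)])]
  have hsplit := Finset.sum_range_succ
    (fun d => C (∑ ℓ ∈ range (d + 1), cK p m ℓ * i1c p m (d - ℓ)) * X ^ d) p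
  rw [hT] at hsplit
  have : (∑ d ∈ range p, C (∑ ℓ ∈ range (d + 1), cK p m ℓ * i1c p m (d - ℓ)) * X ^ d)
      = Kpoly p m * I1e p m - C (∑ ℓ ∈ range (p + 1), cK p m ℓ * i1c p m (p - ℓ)) * X ^ p := by
    linear_combination -hsplit
  rw [this, sp1 hm hmp]
  simp

end


section
variable {p m : ℕ} [Fact p.Prime] (hm : 1 ≤ m) (hmp : m + 1 ≤ p)
include hm hmp

lemma qstI0 : qstI p m 0 = I1e p m := by
  show (∑ d ∈ Finset.range (p - m + 1), C ((if d = 0 then 0 else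
      ((p - m - 1).choose (d - 1) * (p - m).choose d : ℕ) : ZMod p)) * X ^ d) = _
  rw [show (∑ d ∈ Finset.range (p - m + 1), C ((if d = 0 then 0 else
      ((p - m - 1).choose (d - 1) * (p - m).choose d : ℕ) : ZMod p)) * X ^ d)
      = ∑ d ∈ Finset.range (p - m + 1), C (i1c p m d) * X ^ d from rfl]
  rw [I1e, sum_range_ext (i1c p m) (p - m + 1) (p - m + 1) (p + 1) hi1 (by omega) (by omega)]

lemma qstI1 : qstI p m 1 = I2e p m := by
  show (∑ d ∈ Finset.range (p - m + 1),
      C ((((p - m).choose d * (p - m - 1).choose d : ℕ) : ZMod p)) * X ^ d) = _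
  rw [show (∑ d ∈ Finset.range (p - m + 1),
      C ((((p - m).choose d * (p - m - 1).choose d : ℕ) : ZMod p)) * X ^ d)
      = ∑ d ∈ Finset.range (p - m + 1), C (i2c p m d) * X ^ d from rfl]
  rw [I2e, sum_range_ext (i2c p m) (p - m) (p - m + 1) (p + 1) (hi2 hmp) (by omega) (by omega)]

end


/-- The quantum Steenrod operation annihilates the arithmetic flat section:
`q^p·(Σ_0 - Σ_p)·I(q) = (Σ_0 + Σ_1 q + ⋯ + Σ_{p-1} q^{p-1})·I(q)` in `𝔽_p[q]²`. -/
theorem qst_annihilates_arithmetic_flat_section (p m : ℕ) (hp : p.Prime) (hodd : p ≠ 2)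
    (hm1 : 1 ≤ m) (hm2 : m ≤ p - 1) :
    ∀ i : Fin 2,
      Polynomial.X ^ p *
        Matrix.mulVec
          ((qstSigma p m 0 - !![0, 1; 1, 0]).map Polynomial.C) (qstI p m) i
        = Matrix.mulVec
            (∑ d ∈ Finset.range p,
              (Polynomial.X : Polynomial (ZMod p)) ^ d • (qstSigma p m d).map Polynomial.C)
            (qstI p m) i := by
  haveI : Fact p.Prime := ⟨hp⟩
  have hp2 : 2 ≤ p := hp.two_le
  have hmp : m + 1 ≤ p := by omega
  have hdiff : qstSigma p m 0 - !![0, 1; 1, 0] = !![0, -1; 0, 0] := by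
    rw [qstSigma, if_pos rfl]
    ext i j
    fin_cases i <;> fin_cases j <;> simp
  have hRHS : ∀ i : Fin 2,
      Matrix.mulVec
        (∑ d ∈ Finset.range p,
          (Polynomial.X : Polynomial (ZMod p)) ^ d • (qstSigma p m d).map Polynomial.C)
        (qstI p m) i
      = qstP p m i 0 * qstI p m 0 + qstP p m i 1 * qstI p m 1 := by
    intro i
    simp only [Matrix.mulVec, dotProduct, Fin.sum_univ_two, Finset.sum_apply,
      Matrix.sum_apply, Matrix.smul_apply, Matrix.map_apply, smul_eq_mul]
    rw [qstP, qstP]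
    rw [Finset.sum_congr rfl fun d _ => mul_comm (X ^ d) (C (qstSigma p m d i 0)),
      Finset.sum_congr rfl fun d _ => mul_comm (X ^ d) (C (qstSigma p m d i 1))]
  intro i
  rw [hRHS, hdiff]
  rw [qstI0 hm1 hmp, qstI1 hm1 hmp]
  fin_cases i
  · show X ^ p * (Matrix.map !![0, -1; 0, 0] ⇑C).mulVec (qstI p m) 0
        = qstP p m 0 0 * I1e p m + qstP p m 0 1 * I2e p m
    rw [hP00 hm1 hmp, hP01 hm1 hmp]
    simp only [Matrix.mulVec, dotProduct, Fin.sum_univ_two, Matrix.map_apply,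
      Matrix.cons_val', Matrix.cons_val_zero, Matrix.cons_val_one, Matrix.head_cons,
      Matrix.empty_val', Matrix.cons_val_fin_one, Matrix.head_fin_const, map_neg, map_zero,
      map_one]
    rw [show (!![(0 : ZMod p), -1; 0, 0]) 0 0 = 0 from rfl,
      show (!![(0 : ZMod p), -1; 0, 0]) 0 1 = -1 from rfl,
      qstI0 hm1 hmp, qstI1 hm1 hmp, map_zero, map_neg, map_one]
    ring
  · show X ^ p * (Matrix.map !![0, -1; 0, 0] ⇑C).mulVec (qstI p m) 1
        = qstP p m 1 0 * I1e p m + qstP p m 1 1 * I2e p m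
    rw [hP10 hm1 hmp, hP11 hm1 hmp]
    simp only [Matrix.mulVec, dotProduct, Fin.sum_univ_two, Matrix.map_apply,
      Matrix.cons_val', Matrix.cons_val_zero, Matrix.cons_val_one, Matrix.head_cons,
      Matrix.empty_val', Matrix.cons_val_fin_one, Matrix.head_fin_const, map_neg, map_zero,
      map_one]
    rw [show (!![(0 : ZMod p), -1; 0, 0]) 1 0 = 0 from rfl,
      show (!![(0 : ZMod p), -1; 0, 0]) 1 1 = 0 from rfl,
      qstI0 hm1 hmp, qstI1 hm1 hmp, map_zero]
    ring
end

section
/- Let p be an odd prime and d ≥ 1 an integer. In 𝔽_p[t][H], let g = ∏_{k=0}^{d}(H − k·t)² (a monic polynomial of degree 2d+2 in H) and let f = (H^p − t^{p−1}·H)·H·(H − d·t)·∏_{k=1}^{d−1}(H − k·t)². Let Rem be the remainder of f upon division by g in (𝔽_p[t])[H]. Then the coefficient of H^{2d+1} in Rem equals −t^{p−1} if p divides d, and equals 0 otherwise. -/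
open Polynomial Finset

/-!
Write `g = H²(H - dt)²P` and `f = (H^p - t^{p-1}H)·H(H - dt)·P` with
`P = ∏_{k=1}^{d-1}(H - kt)²`. If `p ∤ d`, Fermat gives `(dt)^{p-1} = t^{p-1}`, so `H(H - dt)`
divides `H^p - t^{p-1}H` and `g` divides `f`. If `p ∣ d`, then `f = H^{p-2}·g - t^{p-1}·H³P`,
and `H³P` is monic of degree `2d + 1 < deg g`, so `-t^{p-1}·H³P` is the remainder.
-/

namespace Polynomial

variable {R : Type*} [CommRing R]

theorem natDegree_prod_X_sub_C_sq [Nontrivial R] {ι : Type*} (s : Finset ι) (a : ι → R) :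
    (∏ k ∈ s, (X - C (a k)) ^ 2).natDegree = 2 * #s := by
  rw [natDegree_prod_of_monic _ _ fun k _ => (monic_X_sub_C _).pow 2]
  simp only [(monic_X_sub_C _).natDegree_pow, natDegree_X_sub_C, sum_const, smul_eq_mul]
  ring

theorem prod_range_succ_X_sub_C_sq {s : ℕ → R} (hs : s 0 = 0) {d : ℕ} (hd : 1 ≤ d) :
    ∏ k ∈ range (d + 1), (X - C (s k)) ^ 2
      = X ^ 2 * (X - C (s d)) ^ 2 * ∏ k ∈ Icc 1 (d - 1), (X - C (s k)) ^ 2 := by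
  have hsplit : range (d + 1) = insert 0 (insert d (Icc 1 (d - 1))) := by
    ext k; simp only [mem_range, mem_insert, mem_Icc]; omega
  rw [hsplit, prod_insert (by simp only [mem_insert, mem_Icc]; omega),
    prod_insert (by simp only [mem_Icc]; omega), hs, C_0, sub_zero, mul_assoc]

theorem X_mul_X_sub_C_dvd_X_pow_sub_C_mul_X {n : ℕ} (hn : n ≠ 0) {a T : R}
    (ha : a ^ (n - 1) = T) : X * (X - C a) ∣ X ^ n - C T * X := by
  obtain ⟨Q, hQ⟩ := sub_dvd_pow_sub_pow (X : R[X]) (C a) (n - 1)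
  refine ⟨Q, ?_⟩
  calc X ^ n - C T * X = X * (X ^ (n - 1) - C a ^ (n - 1)) := by
        rw [← C_pow, ha, mul_sub, ← pow_succ', Nat.sub_add_cancel (Nat.one_le_iff_ne_zero.2 hn),
          mul_comm]
    _ = X * (X - C a) * Q := by rw [hQ, mul_assoc]

theorem modByMonic_eq_zero_of_pow_eq {n : ℕ} (hn : n ≠ 0) {a T : R} (ha : a ^ (n - 1) = T)
    {P : R[X]} (hP : P.Monic) :
    ((X ^ n - C T * X) * X * (X - C a) * P) %ₘ (X ^ 2 * (X - C a) ^ 2 * P) = 0 := by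
  obtain ⟨Q, hQ⟩ := X_mul_X_sub_C_dvd_X_pow_sub_C_mul_X hn ha
  refine (modByMonic_eq_zero_iff_dvd ((monic_X_pow 2).mul ((monic_X_sub_C a).pow 2) |>.mul hP)).2
    ⟨Q, ?_⟩
  rw [hQ]; ring

theorem modByMonic_X_pow_sub_C_mul_X [Nontrivial R] {n : ℕ} (hn : 2 ≤ n) (T : R)
    {P : R[X]} (hP : P.Monic) :
    ((X ^ n - C T * X) * X * X * P) %ₘ (X ^ 2 * X ^ 2 * P) = -(C T * (X ^ 3 * P)) := by
  have hg : (X ^ 2 * X ^ 2 * P : R[X]).Monic := ((monic_X_pow 2).mul (monic_X_pow 2)).mul hP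
  refine (div_modByMonic_unique (X ^ (n - 2)) _ hg ⟨?_, ?_⟩).2
  · obtain ⟨m, rfl⟩ := Nat.exists_eq_add_of_le hn
    rw [Nat.add_sub_cancel_left]; ring
  · rw [degree_neg]
    refine degree_lt_degree ((natDegree_C_mul_le T _).trans_lt ?_)
    rw [(monic_X_pow 3).natDegree_mul hP, ((monic_X_pow 2).mul (monic_X_pow 2)).natDegree_mul hP,
      (monic_X_pow 2).natDegree_mul (monic_X_pow 2)]
    simp only [natDegree_X_pow]
    omega

theorem coeff_modByMonic_X_pow_sub_C_mul_X [Nontrivial R] {n : ℕ} (hn : 2 ≤ n) (T : R)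
    {P : R[X]} (hP : P.Monic) :
    (((X ^ n - C T * X) * X * X * P) %ₘ (X ^ 2 * X ^ 2 * P)).coeff (P.natDegree + 3) = -T := by
  rw [modByMonic_X_pow_sub_C_mul_X hn T hP, coeff_neg, coeff_C_mul, coeff_X_pow_mul',
    if_pos (by omega), Nat.add_sub_cancel, hP.coeff_natDegree, mul_one]

end Polynomial

theorem qst_structure_constant_bb_general (p : ℕ) (hp : p.Prime) (d : ℕ) (hd : 1 ≤ d) :
    (((Polynomial.X ^ p
          - Polynomial.C ((Polynomial.X : Polynomial (ZMod p)) ^ (p - 1)) * Polynomial.X)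
        * Polynomial.X
        * (Polynomial.X - Polynomial.C ((d : ZMod p) • (Polynomial.X : Polynomial (ZMod p))))
        * ∏ k ∈ Finset.Icc 1 (d - 1),
            (Polynomial.X - Polynomial.C ((k : ZMod p) • (Polynomial.X : Polynomial (ZMod p)))) ^ 2)
      %ₘ (∏ k ∈ Finset.range (d + 1),
            (Polynomial.X - Polynomial.C ((k : ZMod p) • (Polynomial.X : Polynomial (ZMod p)))) ^ 2)
      : Polynomial (Polynomial (ZMod p))).coeff (2 * d + 1)
      = if p ∣ d then -((Polynomial.X : Polynomial (ZMod p)) ^ (p - 1)) else 0 := by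
  have : Fact p.Prime := ⟨hp⟩
  rw [prod_range_succ_X_sub_C_sq (s := fun k : ℕ => (k : ZMod p) • (X : (ZMod p)[X])) (by simp)
    hd]
  set P := ∏ k ∈ Icc 1 (d - 1), (X - C ((k : ZMod p) • (X : (ZMod p)[X]))) ^ 2 with hP_def
  have hP : P.Monic := monic_prod_of_monic _ _ fun k _ => (monic_X_sub_C _).pow 2
  split_ifs with hpd
  · have hdeg : 2 * d + 1 = P.natDegree + 3 := by
      rw [hP_def, natDegree_prod_X_sub_C_sq, Nat.card_Icc]; omega
    rw [(ZMod.natCast_eq_zero_iff d p).2 hpd, zero_smul, C_0, sub_zero, hdeg]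
    exact coeff_modByMonic_X_pow_sub_C_mul_X hp.two_le _ hP
  · have hd_ne : (d : ZMod p) ≠ 0 := mt (ZMod.natCast_eq_zero_iff d p).1 hpd
    have hfermat : ((d : ZMod p) • (X : (ZMod p)[X])) ^ (p - 1) = X ^ (p - 1) := by
      rw [_root_.smul_pow, ZMod.pow_card_sub_one_eq_one hd_ne, one_smul]
    rw [modByMonic_eq_zero_of_pow_eq hp.ne_zero hfermat hP, coeff_zero]

/-- In `𝔽_p[t][H]` with `g = ∏_{k=0}^{d}(H-kt)²` and
`f = (H^p - t^{p-1}H)·H·(H-dt)·∏_{k=1}^{d-1}(H-kt)²`, the coefficient of `H^{2d+1}` in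
the remainder of `f` modulo `g` equals `-t^{p-1}` if `p ∣ d`, and `0` otherwise. -/
theorem qst_structure_constant_bb (p : ℕ) (hp : p.Prime) (hodd : p ≠ 2) (d : ℕ) (hd : 1 ≤ d) :
    (((Polynomial.X ^ p
          - Polynomial.C ((Polynomial.X : Polynomial (ZMod p)) ^ (p - 1)) * Polynomial.X)
        * Polynomial.X
        * (Polynomial.X - Polynomial.C ((d : ZMod p) • (Polynomial.X : Polynomial (ZMod p))))
        * ∏ k ∈ Finset.Icc 1 (d - 1),
            (Polynomial.X - Polynomial.C ((k : ZMod p) • (Polynomial.X : Polynomial (ZMod p)))) ^ 2)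
      %ₘ (∏ k ∈ Finset.range (d + 1),
            (Polynomial.X - Polynomial.C ((k : ZMod p) • (Polynomial.X : Polynomial (ZMod p)))) ^ 2)
      : Polynomial (Polynomial (ZMod p))).coeff (2 * d + 1)
      = if p ∣ d then -((Polynomial.X : Polynomial (ZMod p)) ^ (p - 1)) else 0 :=
  qst_structure_constant_bb_general p hp d hd
end

section
/- Let p be an odd prime and d ≥ 1 an integer. In 𝔽_p[t][H], let g = ∏_{k=0}^{d}(H − k·t)² and let f = (H^p − t^{p−1}·H)·H·∏_{k=1}^{d−1}(H − k·t)². Let Rem be the remainder of f upon division by g. Then the coefficient of H^{2d+1} in Rem equals −d^{p−2}·t^{p−2} in 𝔽_p[t] (where d^{p−2} is computed in 𝔽_p; in particular this coefficient is 0 when p divides d). -/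
open Polynomial Finset

/-- If `a` is a root of `ψ` and of its derivative, then `(X - C a)^2 ∣ ψ`. -/
lemma sq_dvd_of_isRoot_of_isRoot_derivative {S : Type*} [CommRing S] (a : S) (ψ : Polynomial S)
    (h1 : ψ.eval a = 0) (h2 : ψ.derivative.eval a = 0) :
    (Polynomial.X - Polynomial.C a) ^ 2 ∣ ψ := by
  obtain ⟨q, hq⟩ := Polynomial.dvd_iff_isRoot.mpr h1
  have hq' : q.eval a = 0 := by
    have h3 := congrArg (fun r => Polynomial.eval a (Polynomial.derivative r)) hq
    simp [Polynomial.derivative_mul, h2] at h3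
    exact h3.symm
  obtain ⟨q2, hq2⟩ := Polynomial.dvd_iff_isRoot.mpr hq'
  exact ⟨q2, by rw [hq, hq2]; ring⟩

/-- In `𝔽_p[t][H]` with `g = ∏_{k=0}^{d}(H-kt)²` and
`f = (H^p - t^{p-1}H)·H·∏_{k=1}^{d-1}(H-kt)²`, the coefficient of `H^{2d+1}` in the
remainder of `f` modulo `g` equals `-d^{p-2}·t^{p-2}`. -/
theorem qst_structure_constant_1b (p : ℕ) (hp : p.Prime) (hodd : p ≠ 2) (d : ℕ) (hd : 1 ≤ d) :
    (((Polynomial.X ^ p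
          - Polynomial.C ((Polynomial.X : Polynomial (ZMod p)) ^ (p - 1)) * Polynomial.X)
        * Polynomial.X
        * ∏ k ∈ Finset.Icc 1 (d - 1),
            (Polynomial.X - Polynomial.C ((k : ZMod p) • (Polynomial.X : Polynomial (ZMod p)))) ^ 2)
      %ₘ (∏ k ∈ Finset.range (d + 1),
            (Polynomial.X - Polynomial.C ((k : ZMod p) • (Polynomial.X : Polynomial (ZMod p)))) ^ 2)
      : Polynomial (Polynomial (ZMod p))).coeff (2 * d + 1)
      = Polynomial.C (-(d : ZMod p) ^ (p - 2)) * (Polynomial.X : Polynomial (ZMod p)) ^ (p - 2) := by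
  haveI : Fact p.Prime := ⟨hp⟩
  have hp1 : 1 ≤ p := hp.one_le
  have hp2 : 2 ≤ p := hp.two_le
  set t : Polynomial (ZMod p) := Polynomial.X with ht
  set c : Polynomial (ZMod p) := (d : ZMod p) • t with hc
  set hh : ℕ → Polynomial (Polynomial (ZMod p)) :=
    fun k => (Polynomial.X - Polynomial.C ((k : ZMod p) • t)) ^ 2 with hhh
  set G : Polynomial (Polynomial (ZMod p)) := ∏ k ∈ Finset.range d, hh k with hG
  set φ : Polynomial (Polynomial (ZMod p)) :=
    Polynomial.X ^ (p - 1) - Polynomial.C (t ^ (p - 1)) with hφ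
  set b : Polynomial (ZMod p) := 2 * c ^ (p - 1) - t ^ (p - 1) with hb
  set rl : Polynomial (Polynomial (ZMod p)) :=
    Polynomial.C (-(c ^ (p - 2))) * Polynomial.X + Polynomial.C b with hrl
  -- product manipulations
  have hh0 : hh 0 = Polynomial.X ^ 2 := by simp [hhh]
  have hrange : Finset.range d = insert 0 (Finset.Icc 1 (d - 1)) := by
    ext x
    simp only [Finset.mem_range, Finset.mem_insert, Finset.mem_Icc]
    omega
  have hXp : (Polynomial.X : Polynomial (Polynomial (ZMod p))) ^ p
      = Polynomial.X ^ (p - 1) * Polynomial.X := by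
    rw [← pow_succ]; congr 1; omega
  have hf : ((Polynomial.X ^ p - Polynomial.C (t ^ (p - 1)) * Polynomial.X)
        * Polynomial.X * ∏ k ∈ Finset.Icc 1 (d - 1), hh k) = φ * G := by
    rw [hG, hrange, Finset.prod_insert (by simp), hh0, hXp, hφ]; ring
  have hg : (∏ k ∈ Finset.range (d + 1), hh k)
      = G * (Polynomial.X - Polynomial.C c) ^ 2 := by
    rw [Finset.prod_range_succ, hG]
  -- the key divisibility via Taylor expansion at c
  set ψ : Polynomial (Polynomial (ZMod p)) := φ - rl with hψ
  have hcp : c ^ (p - 2) * c = c ^ (p - 1) := by rw [← pow_succ]; congr 1; omega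
  have he1 : ψ.eval c = 0 := by
    simp only [hψ, hφ, hrl, hb, Polynomial.eval_sub, Polynomial.eval_add, Polynomial.eval_mul,
      Polynomial.eval_pow, Polynomial.eval_X, Polynomial.eval_C]
    linear_combination hcp
  have hcastp : ((p - 1 : ℕ) : Polynomial (ZMod p)) = -1 := by
    have h0 : ((p : ℕ) : Polynomial (ZMod p)) = 0 := by
      simp [← Polynomial.C_eq_natCast, ZMod.natCast_self]
    rw [Nat.cast_sub hp1, h0]; ring
  have he2 : ψ.derivative.eval c = 0 := by
    simp only [hψ, hφ, hrl, Polynomial.derivative_sub, Polynomial.derivative_add,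
      Polynomial.derivative_X_pow, Polynomial.derivative_C, Polynomial.derivative_C_mul,
      Polynomial.derivative_X, mul_one, Polynomial.eval_sub, Polynomial.eval_add,
      Polynomial.eval_mul, Polynomial.eval_pow, Polynomial.eval_X, Polynomial.eval_C,
      Polynomial.eval_natCast, sub_zero, add_zero]
    rw [hcastp, show p - 1 - 1 = p - 2 from by omega]; ring
  obtain ⟨Q, hQ⟩ := sq_dvd_of_isRoot_of_isRoot_derivative c ψ he1 he2
  have hφQ : φ = (Polynomial.X - Polynomial.C c) ^ 2 * Q + rl := by
    rw [← hQ, hψ]; ring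
  -- monicity and degrees
  have hmon : ∀ k ∈ Finset.range d, (hh k).Monic :=
    fun k _ => (Polynomial.monic_X_sub_C _).pow 2
  have hmonicG : G.Monic := Polynomial.monic_prod_of_monic _ _ hmon
  have hmonicsq : ((Polynomial.X - Polynomial.C c) ^ 2).Monic :=
    (Polynomial.monic_X_sub_C _).pow 2
  have hmonicg : (G * (Polynomial.X - Polynomial.C c) ^ 2).Monic := hmonicG.mul hmonicsq
  have hdegG : G.natDegree = 2 * d := by
    rw [hG, Polynomial.natDegree_prod_of_monic _ _ hmon]
    have : ∀ k ∈ Finset.range d, (hh k).natDegree = 2 := by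
      intro k _
      simp [hhh, Polynomial.natDegree_pow, Polynomial.natDegree_X_sub_C]
    rw [Finset.sum_congr rfl this]
    simp [mul_comm]
  have hdegg : (G * (Polynomial.X - Polynomial.C c) ^ 2).natDegree = 2 * d + 2 := by
    rw [hmonicG.natDegree_mul hmonicsq, hdegG,
      Polynomial.natDegree_pow, Polynomial.natDegree_X_sub_C]
  have hdeglt : (rl * G).degree < (G * (Polynomial.X - Polynomial.C c) ^ 2).degree := by
    have h1 : (rl * G).degree ≤ rl.degree + G.degree := Polynomial.degree_mul_le _ _
    have h2 : rl.degree ≤ 1 := Polynomial.degree_linear_le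
    have h3 : G.degree = (2 * d : ℕ) := by
      rw [Polynomial.degree_eq_natDegree hmonicG.ne_zero, hdegG]
    have h4 : (G * (Polynomial.X - Polynomial.C c) ^ 2).degree = ((2 * d + 2 : ℕ) : WithBot ℕ) := by
      rw [Polynomial.degree_eq_natDegree hmonicg.ne_zero, hdegg]
    rw [h4]
    calc (rl * G).degree ≤ rl.degree + G.degree := h1
      _ ≤ 1 + ((2 * d : ℕ) : WithBot ℕ) := by rw [h3]; exact add_le_add h2 le_rfl
      _ = ((2 * d + 1 : ℕ) : WithBot ℕ) := by push_cast; ring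
      _ < ((2 * d + 2 : ℕ) : WithBot ℕ) := by exact_mod_cast Nat.lt_succ_self _
  -- uniqueness of remainder
  have heq : rl * G + (G * (Polynomial.X - Polynomial.C c) ^ 2) * Q = φ * G := by
    rw [hφQ]; ring
  have hmod : (φ * G) %ₘ (G * (Polynomial.X - Polynomial.C c) ^ 2) = rl * G :=
    (Polynomial.div_modByMonic_unique Q (rl * G) hmonicg ⟨heq, hdeglt⟩).2
  rw [hf, hg, hmod]
  -- coefficient extraction
  have hcoeffG : G.coeff (2 * d) = 1 := hdegG ▸ hmonicG.coeff_natDegree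
  have hcoeffG' : G.coeff (2 * d + 1) = 0 :=
    Polynomial.coeff_eq_zero_of_natDegree_lt (by omega)
  have : (rl * G).coeff (2 * d + 1) = -(c ^ (p - 2)) := by
    rw [hrl, add_mul, mul_assoc, Polynomial.coeff_add, Polynomial.coeff_C_mul,
      Polynomial.coeff_C_mul, Polynomial.coeff_X_mul, hcoeffG, hcoeffG']
    ring
  rw [this, hc, ht]
  rw [_root_.smul_pow, Polynomial.smul_eq_C_mul, map_neg]
  ring
end

section
/- Let p be an odd prime and K = 𝔽_p((h,t)) (a field containing invertible elements h, t of characteristic p). Consider the connection matrix A(q) = [[0, h²·q/(1−q)], [1, −2h·q/(1−q)]] with entries in K[[q]]. Suppose Σ = [[a, b],[c, d]] is a 2×2 matrix with entries in K[[q]] satisfying t·q·(dΣ/dq) = A·Σ − Σ·A, with d = 0, and such that the coefficient of q^{pk} in c is zero for every k ≥ 0. Then Σ = 0. -/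
open PowerSeries

theorem coeff_derivativeFun' {R : Type*} [CommSemiring R] (f : PowerSeries R) (n : ℕ) :
    coeff n f.derivativeFun = coeff (n + 1) f * (n + 1) :=
  coeff_derivative f n

/-- Uniqueness of flat endomorphisms: if a matrix `Sig` of power series over a field `K` of
characteristic `p` (containing invertible `h`, `t`) satisfies covariant constancy
`t·q·Sig' = A·Sig - Sig·A` for the equivariant quantum connection matrix
`A = [[0, h²q/(1-q)], [1, -2hq/(1-q)]]` of `T*ℙ¹`, has vanishing lower-right entry, and the
lower-left entry has vanishing coefficients in all `p`-divisible degrees, then `Sig = 0`. -/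
theorem flat_endomorphism_unique (p : ℕ) (hp : p.Prime) (hodd : p ≠ 2)
    (K : Type*) [Field K] [CharP K p] (h t : K) (hh : h ≠ 0) (ht : t ≠ 0)
    (Sig : Matrix (Fin 2) (Fin 2) (PowerSeries K))
    (A : Matrix (Fin 2) (Fin 2) (PowerSeries K))
    (hA : A = !![0, PowerSeries.C (h ^ 2) * PowerSeries.X * (1 - PowerSeries.X)⁻¹;
                 1, PowerSeries.C (-(2 * h)) * PowerSeries.X * (1 - PowerSeries.X)⁻¹])
    (hflat : ∀ i j, (PowerSeries.C t) * PowerSeries.X *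
        PowerSeries.derivativeFun (Sig i j) = (A * Sig - Sig * A) i j)
    (hd : Sig 1 1 = 0)
    (hc : ∀ k : ℕ, PowerSeries.coeff (p * k) (Sig 1 0) = 0) :
    Sig = 0 := by
  set f : PowerSeries K := PowerSeries.C (h ^ 2) * PowerSeries.X * (1 - PowerSeries.X)⁻¹
    with hf_def
  set g : PowerSeries K := PowerSeries.C (-(2 * h)) * PowerSeries.X * (1 - PowerSeries.X)⁻¹
    with hg_def
  have hder0 : derivativeFun (0 : PowerSeries K) = 0 := by
    ext n; simp [coeff_derivativeFun']
  -- entrywise equations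
  have e11 := hflat 1 1
  have e10 := hflat 1 0
  have e00 := hflat 0 0
  rw [hd, hder0] at e11
  simp only [Matrix.sub_apply, Matrix.mul_apply, Fin.sum_univ_two, hA, Matrix.of_apply,
    Matrix.cons_val', Matrix.cons_val_zero, Matrix.cons_val_one, Matrix.head_cons,
    Matrix.head_fin_const, Matrix.empty_val', Matrix.cons_val_fin_one, hd] at e11 e10 e00
  -- from the (1,1) equation : b = c * f
  have hb : Sig 0 1 = Sig 1 0 * f := by linear_combination -e11
  have hXne : (PowerSeries.X : PowerSeries K) ≠ 0 := X_ne_zero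
  have hCt : (PowerSeries.C t) ≠ 0 := by
    simpa using (map_ne_zero_iff _ (C_injective)).mpr ht
  have hCtX : (PowerSeries.C t * PowerSeries.X : PowerSeries K) ≠ 0 :=
    mul_ne_zero hCt hXne
  -- from the (0,0) equation : a' = 0
  have h0 : PowerSeries.C t * PowerSeries.X * derivativeFun (Sig 0 0) = 0 := by
    rw [e00, hb]; ring
  have hader : derivativeFun (Sig 0 0) = 0 := by
    rcases mul_eq_zero.mp h0 with h1 | h1
    · exact absurd h1 hCtX
    · exact h1
  have hacoeff : ∀ n : ℕ, coeff (n + 1) (Sig 0 0) * ((n + 1 : ℕ) : K) = 0 := by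
    intro n
    have h2 := congrArg (coeff n) hader
    rw [coeff_derivativeFun', map_zero] at h2
    push_cast
    push_cast at h2
    exact h2
  -- the (1,0) equation, cleared of denominators
  have hu : (1 - PowerSeries.X : PowerSeries K) * (1 - PowerSeries.X)⁻¹ = 1 := by
    apply PowerSeries.mul_inv_cancel
    simp
  have key : (1 - PowerSeries.X) * (PowerSeries.C t * PowerSeries.X *
      derivativeFun (Sig 1 0))
      = (1 - PowerSeries.X) * Sig 0 0 + PowerSeries.C (-(2 * h)) * PowerSeries.X
        * Sig 1 0 := by
    have e10' : PowerSeries.C t * PowerSeries.X * derivativeFun (Sig 1 0)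
        = Sig 0 0 + g * Sig 1 0 := by
      rw [e10]; ring
    rw [e10', hg_def, mul_add]
    have h3 : (1 - PowerSeries.X) * (PowerSeries.C (-(2 * h)) * PowerSeries.X *
        (1 - PowerSeries.X)⁻¹ * Sig 1 0) = PowerSeries.C (-(2 * h)) * PowerSeries.X
        * Sig 1 0 * ((1 - PowerSeries.X) * (1 - PowerSeries.X)⁻¹) := by ring
    rw [h3, hu, mul_one]
  -- coefficient computations
  have hφ : ∀ n : ℕ, coeff n (PowerSeries.C t * PowerSeries.X * derivativeFun (Sig 1 0))
      = t * (n : K) * coeff n (Sig 1 0) := by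
    intro n
    rw [mul_assoc, coeff_C_mul]
    cases n with
    | zero => simp
    | succ m =>
      rw [coeff_succ_X_mul, coeff_derivativeFun']
      push_cast; ring
  have hψ : ∀ n : ℕ, coeff (n + 1) (PowerSeries.C (-(2 * h)) * PowerSeries.X * Sig 1 0)
      = -(2 * h) * coeff n (Sig 1 0) := by
    intro n; rw [mul_assoc, coeff_C_mul, coeff_succ_X_mul]
  have hψ0 : coeff 0 (PowerSeries.C (-(2 * h)) * PowerSeries.X * Sig 1 0) = 0 := by
    rw [mul_assoc, coeff_C_mul, coeff_zero_X_mul, mul_zero]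
  have hsub : ∀ (n : ℕ) (ψ : PowerSeries K), coeff (n + 1) ((1 - PowerSeries.X) * ψ)
      = coeff (n + 1) ψ - coeff n ψ := by
    intro n ψ
    rw [sub_mul, one_mul, map_sub, coeff_succ_X_mul]
  have hsub0 : ∀ ψ : PowerSeries K, coeff 0 ((1 - PowerSeries.X) * ψ) = coeff 0 ψ := by
    intro ψ
    rw [sub_mul, one_mul, map_sub, coeff_zero_X_mul, sub_zero]
  -- constant coefficient : a₀ = 0
  have ha0 : coeff 0 (Sig 0 0) = 0 := by
    have h4 := congrArg (coeff 0) key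
    rw [hsub0, hφ, map_add, hsub0, hψ0] at h4
    push_cast at h4
    linear_combination -h4
  -- the recursion
  have R1 : ∀ n : ℕ, t * ((n + 1 : ℕ) : K) * coeff (n + 1) (Sig 1 0)
      - t * (n : K) * coeff n (Sig 1 0)
      = (coeff (n + 1) (Sig 0 0) - coeff n (Sig 0 0))
        + (-(2 * h)) * coeff n (Sig 1 0) := by
    intro n
    have h5 := congrArg (coeff (n + 1)) key
    rw [hsub, hφ, hφ, map_add, hsub, hψ] at h5
    exact h5
  -- main induction
  have main : ∀ n : ℕ, coeff n (Sig 1 0) = 0 ∧ coeff n (Sig 0 0) = 0 := by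
    intro n
    induction n with
    | zero => exact ⟨by simpa using hc 0, ha0⟩
    | succ n ih =>
      obtain ⟨hcn, han⟩ := ih
      have R : t * ((n + 1 : ℕ) : K) * coeff (n + 1) (Sig 1 0)
          = coeff (n + 1) (Sig 0 0) := by
        have h6 := R1 n
        rw [hcn, han] at h6
        linear_combination h6
      by_cases hpn : p ∣ (n + 1)
      · have hcast : ((n + 1 : ℕ) : K) = 0 := (CharP.cast_eq_zero_iff K p _).mpr hpn
        obtain ⟨k, hk⟩ := hpn
        have hc1 : coeff (n + 1) (Sig 1 0) = 0 := by rw [hk]; exact hc k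
        have ha1 : coeff (n + 1) (Sig 0 0) = 0 := by rw [← R, hcast]; ring
        exact ⟨hc1, ha1⟩
      · have hcast : ((n + 1 : ℕ) : K) ≠ 0 := fun H => hpn ((CharP.cast_eq_zero_iff K p _).mp H)
        have ha1 : coeff (n + 1) (Sig 0 0) = 0 :=
          (mul_eq_zero.mp (hacoeff n)).resolve_right hcast
        have hc1 : coeff (n + 1) (Sig 1 0) = 0 := by
          have hR := R
          rw [ha1] at hR
          rcases mul_eq_zero.mp hR with h1 | h1
          · rcases mul_eq_zero.mp h1 with h2 | h2
            · exact absurd h2 ht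
            · exact absurd h2 hcast
          · exact h1
        exact ⟨hc1, ha1⟩
  have hc0 : Sig 1 0 = 0 := PowerSeries.ext fun n => by simpa using (main n).1
  have ha0' : Sig 0 0 = 0 := PowerSeries.ext fun n => by simpa using (main n).2
  have hb0 : Sig 0 1 = 0 := by rw [hb, hc0, zero_mul]
  apply Matrix.ext
  intro i j
  fin_cases i <;> fin_cases j <;> simp only [Matrix.zero_apply]
  · exact ha0'
  · exact hb0
  · exact hc0
  · exact hd
end
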